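/- arXiv:1302.6583 — 2 statements merged into one kernel-verified Lean document; each statement's English description precedes it below -/
import Mathlib

section
/- Define V(h) = ∑_{k=0}^{h} ∑_{i=0}^{h-k} C(k, h-k-i). Then V satisfies V(0) = 1, V(1) = 2, and V(h) = V(h-1) + V(h-2) + 1 for all h ≥ 2. -/
def V (h : ℕ) : ℕ := ∑ k ∈ Finset.range (h + 1), ∑ i ∈ Finset.range (h - k + 1), Nat.choose k (h - k - i)

/-! Level `k` of the tree of height `h` has `∑_{j ≤ h-k} C(k, j)` vertices; regrouping the double
sum by `m = k + j` turns `V h` into `∑_{m ≤ h} ∑_{k ≤ m} C(k, m-k) = ∑_{m ≤ h} F(m+1)`, a sum of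
shallow-diagonal binomial sums, and the partial sums of the Fibonacci numbers give
`V h + 1 = F(h+3)`. The recurrence is then the Fibonacci recurrence. -/

open Finset

lemma Nat.sum_range_choose_sub (k n : ℕ) :
    ∑ i ∈ range (n + 1), k.choose (n - i) = ∑ j ∈ range (n + 1), k.choose j := by
  simpa using sum_range_reflect (fun j => k.choose j) (n + 1)

lemma Nat.sum_range_choose_diag (m : ℕ) :
    ∑ k ∈ range (m + 1), k.choose (m - k) = Nat.fib (m + 1) := by
  rw [Nat.fib_succ_eq_sum_choose, Nat.sum_antidiagonal_eq_sum_range_succ_mk]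

lemma V_eq_sum_fib (h : ℕ) : V h = ∑ m ∈ range (h + 1), Nat.fib (m + 1) := by
  calc V h = ∑ k ∈ range (h + 1), ∑ j ∈ range (h + 1 - k), k.choose j := by
        refine sum_congr rfl fun k hk => ?_
        rw [Nat.sum_range_choose_sub, Nat.sub_add_comm (Nat.lt_succ_iff.mp (mem_range.mp hk))]
    _ = ∑ m ∈ range (h + 1), ∑ k ∈ range (m + 1), k.choose (m - k) :=
        (sum_range_diag_flip _ _).symm
    _ = ∑ m ∈ range (h + 1), Nat.fib (m + 1) := sum_congr rfl fun m _ => Nat.sum_range_choose_diag m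

lemma V_add_one (h : ℕ) : V h + 1 = Nat.fib (h + 3) := by
  rw [V_eq_sum_fib, Nat.fib_succ_eq_succ_sum (h + 2), sum_range_succ' _ (h + 1), Nat.fib_zero,
    add_zero]

theorem fib_tree_vertex_recurrence :
    V 0 = 1 ∧ V 1 = 2 ∧ ∀ h, 2 ≤ h → V h = V (h - 1) + V (h - 2) + 1 := by
  refine ⟨by decide, by decide, fun h hh => ?_⟩
  obtain ⟨n, rfl⟩ : ∃ n, h = n + 2 := ⟨h - 2, by omega⟩
  have hfib : Nat.fib (n + 5) = Nat.fib (n + 3) + Nat.fib (n + 4) := Nat.fib_add_two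
  have h2 : V (n + 2) + 1 = Nat.fib (n + 5) := V_add_one _
  have h1 : V (n + 1) + 1 = Nat.fib (n + 4) := V_add_one _
  have h0 : V n + 1 = Nat.fib (n + 3) := V_add_one _
  simp only [Nat.add_sub_cancel, show n + 2 - 1 = n + 1 by omega]
  omega
end

section
/- Let f be the Fibonacci sequence with f(0)=1 and f(1)=1. Then for every n ≥ 2, f(n) = 1 + ∑_{k=0}^{n-2} ∑_{i=0}^{n-k-2} C(k, n-k-i-2). -/
/-! Reversing the inner sum turns the double sum into `∑ C(k, j)` over the triangle
`k + j ≤ n - 2`. Summing along the antidiagonals `k + j = m` instead, each diagonal contributes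
`fib (m + 1)` (the shallow-diagonal identity for Pascal's triangle), and
`1 + ∑_{m ≤ n-2} fib (m + 1) = fib (n + 1)`. -/

open Finset

namespace Nat

theorem fib_succ_eq_sum_range_choose (m : ℕ) :
    fib (m + 1) = ∑ k ∈ range (m + 1), choose k (m - k) := by
  rw [fib_succ_eq_sum_choose, Finset.Nat.sum_antidiagonal_eq_sum_range_succ_mk]

theorem fib_add_two_eq_one_add_sum_fib_succ (n : ℕ) :
    fib (n + 2) = 1 + ∑ m ∈ range n, fib (m + 1) := by
  rw [fib_succ_eq_succ_sum (n + 1), sum_range_succ', fib_zero]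
  ring

theorem fib_add_three_eq_one_add_sum_triangle_choose (N : ℕ) :
    fib (N + 3) = 1 + ∑ k ∈ range (N + 1), ∑ j ∈ range (N + 1 - k), choose k j := by
  rw [← sum_range_diag_flip, fib_add_two_eq_one_add_sum_fib_succ]
  simp_rw [fib_succ_eq_sum_range_choose]

end Nat

theorem fib_closed_form (n : ℕ) (hn : 2 ≤ n) :
    Nat.fib (n + 1) =
      1 + ∑ k ∈ Finset.range (n - 2 + 1), ∑ i ∈ Finset.range (n - k - 2 + 1),
        Nat.choose k (n - k - i - 2) := by
  obtain ⟨N, rfl⟩ := Nat.exists_eq_add_of_le' hn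
  rw [Nat.fib_add_three_eq_one_add_sum_triangle_choose, Nat.add_sub_cancel]
  congr 1
  refine sum_congr rfl fun k hk => ?_
  have hkN : k ≤ N := Nat.lt_succ_iff.mp (mem_range.mp hk)
  rw [← sum_range_reflect, show N + 2 - k - 2 + 1 = N + 1 - k by omega]
  refine sum_congr rfl fun i _ => ?_
  rw [show N + 2 - k - i - 2 = N + 1 - k - 1 - i by omega]
end
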